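/- Let A : ℝ³∖{0} → Matrix(3,3,ℝ) be a continuous map (components A_μ{}^i(x)) which is equivariant under rotations: A(Rx) = R A(x) Rᵀ for every R ∈ SO(3) and every x ≠ 0. Then there exist functions W, V, U : (0,∞) → ℝ such that A_μ{}^i(x) = ε_μ{}^{ij} (x_j/r) W(r) + δ_μ^i V(r) + (x_μ x^i/r²) U(r) for all x ≠ 0, where r = |x|. That is, the ansatz with three radial functions is the most general spherically symmetric second-rank field on ℝ³∖{0}. -/

import Mathlib

/-!
A rotation `R` with last column `x / r` carries the axis point `r e₂` to `x`, so by equivariance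
`A x = R A(r e₂) Rᵀ`. The quarter-turn about the `e₂`-axis fixes `r e₂`, which forces `A(r e₂)` to
be of the form `!![V, W, 0; -W, V, 0; 0, 0, V + U]`. Conjugating that matrix by `R` and using that
the columns of `R` form a positively oriented orthonormal frame, `c₀ c₁ᵀ - c₁ c₀ᵀ = ε · c₂` and
`c₀ c₀ᵀ + c₁ c₁ᵀ = 1 - c₂ c₂ᵀ`, gives the ansatz with `c₂ = x / r`.
-/

open Matrix

/-- The totally antisymmetric Levi-Civita symbol on three indices, `eps 0 1 2 = 1`. -/
noncomputable def eps (i j k : Fin 3) : ℝ :=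
  ((j : ℝ) - (i : ℝ)) * ((k : ℝ) - (i : ℝ)) * ((k : ℝ) - (j : ℝ)) / 2

/-- The radius `r = |x|` of a point `x ∈ ℝ³`. -/
noncomputable def rad (x : Fin 3 → ℝ) : ℝ := Real.sqrt (∑ i, x i ^ 2)

lemma rad_sq (x : Fin 3 → ℝ) : rad x ^ 2 = x ⬝ᵥ x := by
  rw [rad, Real.sq_sqrt (by positivity)]
  simp [dotProduct, sq]

lemma rad_pos {x : Fin 3 → ℝ} (hx : x ≠ 0) : 0 < rad x := by
  have h : rad x ^ 2 ≠ 0 := by rwa [rad_sq, Ne, dotProduct_self_eq_zero]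
  exact (Real.sqrt_nonneg _).lt_of_ne' ((pow_ne_zero_iff two_ne_zero).mp h)

section HalfTurn

variable {n K : Type*} [Fintype n] [DecidableEq n] [Field K]

def halfTurn (m : n → K) : Matrix n n K := (2 / (m ⬝ᵥ m)) • vecMulVec m m - 1

lemma transpose_halfTurn (m : n → K) : (halfTurn m)ᵀ = halfTurn m := by
  simp [halfTurn, transpose_vecMulVec]

lemma halfTurn_mul_self {m : n → K} (hm : m ⬝ᵥ m ≠ 0) : halfTurn m * halfTurn m = 1 := by
  have hsq : vecMulVec m m * vecMulVec m m = (m ⬝ᵥ m) • vecMulVec m m := by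
    rw [vecMulVec_mul_vecMulVec, vecMulVec_smul]
  have hc : 2 / (m ⬝ᵥ m) * (2 / (m ⬝ᵥ m)) * (m ⬝ᵥ m) = 2 * (2 / (m ⬝ᵥ m)) := by
    field_simp
  simp only [halfTurn, sub_mul, mul_sub, smul_mul_smul_comm, hsq, Matrix.mul_one, Matrix.one_mul,
    Matrix.mul_smul]
  linear_combination (norm := module) hc • vecMulVec m m

lemma det_halfTurn {m : n → K} (hm : m ⬝ᵥ m ≠ 0) :
    (halfTurn m).det = (-1) ^ (Fintype.card n + 1) := by
  have h : halfTurn m = -(1 + replicateCol Unit (-(2 / (m ⬝ᵥ m)) • m) * replicateRow Unit m) := by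
    rw [← vecMulVec_eq, halfTurn, smul_vecMulVec]
    module
  rw [h, det_neg, det_one_add_replicateCol_mul_replicateRow, dotProduct_smul, smul_eq_mul,
    neg_mul, div_mul_cancel₀ _ hm]
  ring

lemma halfTurn_mulVec (m v : n → K) :
    halfTurn m *ᵥ v = (2 / (m ⬝ᵥ m) * (m ⬝ᵥ v)) • m - v := by
  rw [halfTurn, sub_mulVec, smul_mulVec, vecMulVec_mulVec, one_mulVec, op_smul_eq_smul, smul_smul]

end HalfTurn

lemma exists_rotation_mulVec_single_eq {u : Fin 3 → ℝ} (hu : u ⬝ᵥ u = 1) :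
    ∃ R : Matrix (Fin 3) (Fin 3) ℝ, Rᵀ * R = 1 ∧ R.det = 1 ∧ R *ᵥ Pi.single 2 1 = u := by
  -- The half-turn about the bisector `u + e₂` swaps `e₂` and `u`; this axis degenerates
  -- for `u = -e₂`, where any axis orthogonal to `e₂` does.
  obtain ⟨m, hm, hmu⟩ : ∃ m : Fin 3 → ℝ, m ⬝ᵥ m ≠ 0 ∧ halfTurn m *ᵥ Pi.single 2 1 = u := by
    by_cases h : u 2 = -1
    · have hu01 : u 0 ^ 2 + u 1 ^ 2 = 0 := by
        simp [dotProduct, Fin.sum_univ_three, h] at hu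
        nlinarith
      have hu' : u = -Pi.single 2 1 := by
        ext j
        fin_cases j <;> simp [h] <;> nlinarith [sq_nonneg (u 0), sq_nonneg (u 1)]
      refine ⟨Pi.single 0 1, by simp, ?_⟩
      rw [halfTurn_mulVec, hu']
      simp
    · have hne : u 2 + 1 ≠ 0 := fun h' => h (by linarith)
      have hm : (u + Pi.single 2 1) ⬝ᵥ (u + Pi.single 2 1) = 2 * (u 2 + 1) := by
        simp [add_dotProduct, dotProduct_add, hu]
        ring
      refine ⟨u + Pi.single 2 1, by rw [hm]; exact mul_ne_zero two_ne_zero hne, ?_⟩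
      rw [halfTurn_mulVec, hm, show (u + Pi.single 2 1) ⬝ᵥ Pi.single 2 1 = u 2 + 1 by simp,
        div_mul_eq_mul_div, mul_div_mul_left _ _ two_ne_zero, div_self hne, one_smul,
        add_sub_cancel_right]
  refine ⟨halfTurn m, by rw [transpose_halfTurn, halfTurn_mul_self hm], ?_, hmu⟩
  rw [det_halfTurn hm]
  norm_num

lemma adjugate_eq_transpose {n K : Type*} [Fintype n] [DecidableEq n] [CommRing K]
    {R : Matrix n n K} (hR : Rᵀ * R = 1) (hdet : R.det = 1) : adjugate R = Rᵀ := by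
  rw [← inv_eq_left_inv hR, inv_def, hdet, Ring.inverse_one, one_smul]

lemma sum_eps_mul_col_two {R : Matrix (Fin 3) (Fin 3) ℝ} (hR : Rᵀ * R = 1) (hdet : R.det = 1)
    (μ i : Fin 3) : ∑ j, eps μ i j * R j 2 = R μ 0 * R i 1 - R μ 1 * R i 0 := by
  -- The last row of `adjugate R = Rᵀ` says that column 2 is the cross product of columns 0, 1.
  have h := congrFun (adjugate_eq_transpose hR hdet) 2
  rw [adjugate_fin_three] at h
  have h0 := congrFun h 0
  have h1 := congrFun h 1
  have h2 := congrFun h 2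
  simp only [of_apply, cons_val', cons_val_zero, cons_val_fin_one, cons_val, cons_val_one,
    transpose_apply] at h0 h1 h2
  fin_cases μ <;> fin_cases i <;> simp [eps, Fin.sum_univ_three] <;> norm_num <;> linarith

lemma mul_axial_mul_transpose_apply {R : Matrix (Fin 3) (Fin 3) ℝ} (hR : Rᵀ * R = 1)
    (hdet : R.det = 1) (w v s : ℝ) (μ i : Fin 3) :
    (R * !![v, w, 0; -w, v, 0; 0, 0, s] * Rᵀ) μ i =
      (∑ j, eps μ i j * R j 2) * w + (if μ = i then 1 else 0) * v + R μ 2 * R i 2 * (s - v) := by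
  have horth : R μ 0 * R i 0 + R μ 1 * R i 1 + R μ 2 * R i 2 = if μ = i then 1 else 0 := by
    simpa [mul_apply, Fin.sum_univ_three, one_apply] using
      congrFun (congrFun (mul_eq_one_comm.mp hR : R * Rᵀ = 1) μ) i
  rw [sum_eps_mul_col_two hR hdet, ← horth]
  simp [mul_apply, Fin.sum_univ_three]
  ring

def quarterTurn : Matrix (Fin 3) (Fin 3) ℝ := !![0, -1, 0; 1, 0, 0; 0, 0, 1]

lemma transpose_quarterTurn_mul_self : quarterTurnᵀ * quarterTurn = 1 := by
  ext i j
  fin_cases i <;> fin_cases j <;> simp [quarterTurn, mul_apply, Fin.sum_univ_three]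

lemma det_quarterTurn : quarterTurn.det = 1 := by
  simp [quarterTurn, det_fin_three]

lemma quarterTurn_mulVec_single (r : ℝ) : quarterTurn *ᵥ Pi.single 2 r = Pi.single 2 r := by
  ext i
  fin_cases i <;> simp [quarterTurn]

lemma quarterTurn_mul_mul_transpose (M : Matrix (Fin 3) (Fin 3) ℝ) :
    quarterTurn * M * quarterTurnᵀ =
      !![M 1 1, -M 1 0, -M 1 2; -M 0 1, M 0 0, M 0 2; -M 2 1, M 2 0, M 2 2] := by
  ext i j
  fin_cases i <;> fin_cases j <;>
    simp [quarterTurn, mul_apply, vecMul, dotProduct, Fin.sum_univ_three]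

lemma eq_axial_of_quarterTurn_mul_mul_transpose_eq {M : Matrix (Fin 3) (Fin 3) ℝ}
    (h : quarterTurn * M * quarterTurnᵀ = M) :
    M = !![M 0 0, M 0 1, 0; -M 0 1, M 0 0, 0; 0, 0, M 2 2] := by
  rw [quarterTurn_mul_mul_transpose, ← Matrix.ext_iff] at h
  have h02 := h 0 2
  have h12 := h 1 2
  have h20 := h 2 0
  have h21 := h 2 1
  have h10 := h 1 0
  have h11 := h 1 1
  simp only [of_apply, cons_val', cons_val_fin_one, cons_val, cons_val_zero, cons_val_one]
    at h02 h12 h20 h21 h10 h11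
  ext i j
  fin_cases i <;> fin_cases j <;> simp <;> linarith

theorem stmt14_general (A : (Fin 3 → ℝ) → Matrix (Fin 3) (Fin 3) ℝ)
    (heq : ∀ R : Matrix (Fin 3) (Fin 3) ℝ, Rᵀ * R = 1 → R.det = 1 →
      ∀ x : Fin 3 → ℝ, x ≠ 0 → A (R.mulVec x) = R * A x * Rᵀ) :
    ∃ W V U : ℝ → ℝ, ∀ x : Fin 3 → ℝ, x ≠ 0 → ∀ μ i, A x μ i =
      (∑ j, eps μ i j * x j / rad x) * W (rad x) +
      (if μ = i then (1 : ℝ) else 0) * V (rad x) +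
      x μ * x i / rad x ^ 2 * U (rad x) := by
  refine ⟨fun r => A (Pi.single 2 r : Fin 3 → ℝ) 0 1, fun r => A (Pi.single 2 r : Fin 3 → ℝ) 0 0,
    fun r => A (Pi.single 2 r : Fin 3 → ℝ) 2 2 - A (Pi.single 2 r : Fin 3 → ℝ) 0 0,
    fun x hx μ i => ?_⟩
  set r := rad x
  have hr : 0 < r := rad_pos hx
  have haxis : (Pi.single 2 r : Fin 3 → ℝ) ≠ 0 := by simpa using hr.ne'
  have hxx : x ⬝ᵥ x = r ^ 2 := (rad_sq x).symm
  obtain ⟨R, hR, hdet, hRu⟩ := exists_rotation_mulVec_single_eq (u := r⁻¹ • x) (by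
    rw [smul_dotProduct, dotProduct_smul, hxx, smul_eq_mul, smul_eq_mul]; field_simp)
  have hcol : ∀ j, R j 2 = x j / r := fun j => by simpa [div_eq_inv_mul] using congrFun hRu j
  have hRx : R *ᵥ Pi.single 2 r = x := by ext j; simp [hcol]; field_simp
  have hAx : A x = R * A (Pi.single 2 r) * Rᵀ := hRx ▸ heq R hR hdet _ haxis
  have hQ := heq _ transpose_quarterTurn_mul_self det_quarterTurn _ haxis
  rw [quarterTurn_mulVec_single] at hQ
  rw [hAx, eq_axial_of_quarterTurn_mul_mul_transpose_eq hQ.symm,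
    mul_axial_mul_transpose_apply hR hdet]
  simp [hcol]
  field_simp

/-- every continuous rotation-equivariant matrix field on `ℝ³ ∖ {0}`
(`A(Rx) = R A(x) Rᵀ` for all `R ∈ SO(3)`) has the spherically symmetric form
`A_μ{}^i = ε_μ{}^{ij} (x_j/r) W + δ_μ^i V + (x_μ x^i/r²) U` for some radial
functions `W, V, U`. -/
theorem stmt14 (A : (Fin 3 → ℝ) → Matrix (Fin 3) (Fin 3) ℝ)
    (hA : ContinuousOn A {x : Fin 3 → ℝ | x ≠ 0})
    (heq : ∀ R : Matrix (Fin 3) (Fin 3) ℝ, Rᵀ * R = 1 → R.det = 1 →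
      ∀ x : Fin 3 → ℝ, x ≠ 0 → A (R.mulVec x) = R * A x * Rᵀ) :
    ∃ W V U : ℝ → ℝ, ∀ x : Fin 3 → ℝ, x ≠ 0 → ∀ μ i, A x μ i =
      (∑ j, eps μ i j * x j / rad x) * W (rad x) +
      (if μ = i then (1 : ℝ) else 0) * V (rad x) +
      x μ * x i / rad x ^ 2 * U (rad x) :=
  stmt14_general A heq
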